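/- Let H be a Hopf algebra over a field k with antipode S, and A a left H-module algebra that is H-semiprime and satisfies the ascending chain condition on right annihilators. Then A is E'_H-torsionfree as a right module over itself: every right ideal I ∈ E'_H has zero left annihilator in A. -/

import Mathlib

open TensorProduct

def IsModuleAlgebra (k : Type*) [Field k] {H A : Type*} [Ring H] [HopfAlgebra k H]
    [Ring A] [Algebra k A] (act : H →ₗ[k] A →ₗ[k] A) : Prop :=
  (∀ g h : H, act (g * h) = (act g) ∘ₗ (act h)) ∧
  (act 1 = LinearMap.id) ∧
  (∀ (h : H) (a b : A),
    act h (a * b) =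
      LinearMap.mul' k A ((TensorProduct.map (act.flip a) (act.flip b))
        (Coalgebra.comul h))) ∧
  (∀ h : H, act h 1 = Coalgebra.counit (R := k) h • (1 : A))

/-- A subset of a ring `A` is a right ideal. -/
def IsRightIdeal {A : Type*} [Ring A] (I : Set A) : Prop :=
  (0 : A) ∈ I ∧ (∀ x ∈ I, ∀ y ∈ I, x + y ∈ I) ∧ (∀ x ∈ I, ∀ a : A, x * a ∈ I)

/-- An essential right ideal: a right ideal meeting every nonzero right ideal nontrivially. -/
def IsEssentialRightIdeal {A : Type*} [Ring A] (I : Set A) : Prop :=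
  IsRightIdeal I ∧
    ∀ J : Set A, IsRightIdeal J → (∃ y ∈ J, y ≠ 0) → ∃ x ∈ I, x ∈ J ∧ x ≠ 0

/-- The filter `E'_H`: right ideals `I` of `A` such that for each `h ∈ S(H)` there is an
essential right ideal `J` of `A` with `h ⊳ J ⊆ I`. -/
def MemEH (k : Type*) [Field k] {H A : Type*} [Ring H] [HopfAlgebra k H]
    [Ring A] [Algebra k A] (act : H →ₗ[k] A →ₗ[k] A) (I : Set A) : Prop :=
  IsRightIdeal I ∧
    ∀ h : H, (∃ g : H, HopfAlgebra.antipode (R := k) g = h) →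
      ∃ J : Set A, IsEssentialRightIdeal J ∧ ∀ x ∈ J, act h x ∈ I

/-- A subset of a ring is a two-sided ideal. -/
def IsTwoSidedIdealSet {A : Type*} [Ring A] (T : Set A) : Prop :=
  (0 : A) ∈ T ∧ (∀ x ∈ T, ∀ y ∈ T, x + y ∈ T) ∧ (∀ x ∈ T, -x ∈ T) ∧
    (∀ x ∈ T, ∀ a : A, x * a ∈ T ∧ a * x ∈ T)

/-- A subset is nilpotent: all products of `n` of its elements vanish, for some `n > 0`. -/
def IsNilpotentSet {A : Type*} [Ring A] (T : Set A) : Prop :=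
  ∃ n : ℕ, 0 < n ∧ ∀ f : Fin n → A, (∀ i, f i ∈ T) → (List.ofFn f).prod = 0

/-- `A` is `H`-semiprime: it has no nonzero nilpotent `H`-stable two-sided ideals. -/
def IsHSemiprime (k : Type*) [Field k] {H A : Type*} [Ring H] [HopfAlgebra k H]
    [Ring A] [Algebra k A] (act : H →ₗ[k] A →ₗ[k] A) : Prop :=
  ∀ T : Set A, IsTwoSidedIdealSet T → (∀ h : H, ∀ t ∈ T, act h t ∈ T) →
    IsNilpotentSet T → T = {0}

/-- `A` satisfies the ascending chain condition on right annihilators. -/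
def ACCRightAnnihilators (A : Type*) [Ring A] : Prop :=
  ∀ f : ℕ → Set A,
    (∀ n, ∃ X : Set A, f n = {a : A | ∀ x ∈ X, x * a = 0}) →
    (∀ n, f n ⊆ f (n + 1)) → ∃ N, ∀ n, N ≤ n → f n = f N

/-! ### Auxiliary ring-theoretic lemmas -/

section RingLemmas

variable {A : Type*} [Ring A]

/-- The right annihilator of an element. -/
def rAnn (z : A) : Set A := {r : A | z * r = 0}

lemma mem_rAnn {z r : A} : r ∈ rAnn z ↔ z * r = 0 := Iff.rfl

lemma rAnn_isRightIdeal (z : A) : IsRightIdeal (rAnn z) := by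
  refine ⟨by simp [rAnn], ?_, ?_⟩
  · intro x hx y hy
    simp only [mem_rAnn] at *
    rw [mul_add, hx, hy, add_zero]
  · intro x hx c
    simp only [mem_rAnn] at *
    rw [← mul_assoc, hx, zero_mul]

lemma essential_univ : IsEssentialRightIdeal (Set.univ : Set A) :=
  ⟨⟨trivial, fun _ _ _ _ => trivial, fun _ _ _ => trivial⟩,
    fun _ _ ⟨y, hy, hy0⟩ => ⟨y, trivial, hy, hy0⟩⟩

lemma essential_of_subset {K K' : Set A} (hK : IsEssentialRightIdeal K)
    (hK' : IsRightIdeal K') (hsub : K ⊆ K') : IsEssentialRightIdeal K' := by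
  refine ⟨hK', fun J hJ hJne => ?_⟩
  obtain ⟨x, hx, hxJ, hx0⟩ := hK.2 J hJ hJne
  exact ⟨x, hsub hx, hxJ, hx0⟩

lemma isRightIdeal_inter {K1 K2 : Set A} (h1 : IsRightIdeal K1) (h2 : IsRightIdeal K2) :
    IsRightIdeal (K1 ∩ K2) := by
  refine ⟨⟨h1.1, h2.1⟩, ?_, ?_⟩
  · intro x hx y hy
    exact ⟨h1.2.1 x hx.1 y hy.1, h2.2.1 x hx.2 y hy.2⟩
  · intro x hx a
    exact ⟨h1.2.2 x hx.1 a, h2.2.2 x hx.2 a⟩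

lemma essential_inter {K1 K2 : Set A} (h1 : IsEssentialRightIdeal K1)
    (h2 : IsEssentialRightIdeal K2) : IsEssentialRightIdeal (K1 ∩ K2) := by
  refine ⟨isRightIdeal_inter h1.1 h2.1, fun J hJ hJne => ?_⟩
  obtain ⟨y, hy, hyJ, hy0⟩ := h2.2 J hJ hJne
  obtain ⟨x, hx1, hx, hx0⟩ := h1.2 (K2 ∩ J) (isRightIdeal_inter h2.1 hJ) ⟨y, ⟨hy, hyJ⟩, hy0⟩
  exact ⟨x, ⟨hx1, hx.1⟩, hx.2, hx0⟩

lemma essential_preimage (c : A) {K : Set A} (hK : IsEssentialRightIdeal K) :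
    IsEssentialRightIdeal {r : A | c * r ∈ K} := by
  constructor
  · refine ⟨by simpa using hK.1.1, ?_, ?_⟩
    · intro x hx y hy
      simp only [Set.mem_setOf_eq, mul_add] at *
      exact hK.1.2.1 _ hx _ hy
    · intro x hx a
      simp only [Set.mem_setOf_eq, ← mul_assoc] at *
      exact hK.1.2.2 _ hx a
  · rintro J hJ ⟨y, hy, hy0⟩
    by_cases hcJ : ∀ j ∈ J, c * j = 0
    · exact ⟨y, by simpa [hcJ y hy] using hK.1.1, hy, hy0⟩
    · push_neg at hcJ
      obtain ⟨j0, hj0J, hj0⟩ := hcJ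
      have hJ' : IsRightIdeal {z : A | ∃ r ∈ J, z = c * r} := by
        refine ⟨⟨0, hJ.1, (mul_zero c).symm⟩, ?_, ?_⟩
        · rintro x ⟨r1, hr1, rfl⟩ y ⟨r2, hr2, rfl⟩
          exact ⟨r1 + r2, hJ.2.1 _ hr1 _ hr2, (mul_add c r1 r2).symm⟩
        · rintro x ⟨r1, hr1, rfl⟩ a
          exact ⟨r1 * a, hJ.2.2 _ hr1 a, mul_assoc c r1 a⟩
      obtain ⟨x, hxK, ⟨r, hrJ, rfl⟩, hx0⟩ :=
        hK.2 _ hJ' ⟨c * j0, ⟨j0, hj0J, rfl⟩, hj0⟩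
      refine ⟨r, hxK, hrJ, ?_⟩
      rintro rfl
      exact hx0 (mul_zero c)

/-- The right singular set of `A`. -/
def SingSet (A : Type*) [Ring A] : Set A := {z | IsEssentialRightIdeal (rAnn z)}

lemma sing_of_subset {z : A} {K : Set A} (hK : IsEssentialRightIdeal K)
    (hsub : K ⊆ rAnn z) : z ∈ SingSet A :=
  essential_of_subset hK (rAnn_isRightIdeal z) hsub

lemma zero_mem_sing : (0 : A) ∈ SingSet A := by
  have : rAnn (0 : A) = Set.univ := by ext r; simp [rAnn]
  unfold SingSet
  rw [Set.mem_setOf_eq, this]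
  exact essential_univ

lemma add_mem_sing {y z : A} (hy : y ∈ SingSet A) (hz : z ∈ SingSet A) :
    y + z ∈ SingSet A := by
  refine sing_of_subset (essential_inter hy hz) ?_
  rintro r ⟨hr1, hr2⟩
  simp only [mem_rAnn] at *
  rw [add_mul, hr1, hr2, add_zero]

lemma neg_mem_sing {z : A} (hz : z ∈ SingSet A) : -z ∈ SingSet A := by
  refine sing_of_subset hz ?_
  intro r hr
  simp only [mem_rAnn] at *
  rw [neg_mul, hr, neg_zero]

lemma mul_left_mem_sing {z : A} (c : A) (hz : z ∈ SingSet A) : c * z ∈ SingSet A := by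
  refine sing_of_subset hz ?_
  intro r hr
  simp only [mem_rAnn] at *
  rw [mul_assoc, hr, mul_zero]

lemma mul_right_mem_sing {z : A} (c : A) (hz : z ∈ SingSet A) : z * c ∈ SingSet A := by
  refine sing_of_subset (essential_preimage c hz) ?_
  intro r hr
  simp only [Set.mem_setOf_eq, mem_rAnn] at *
  rw [mul_assoc, hr]

lemma sum_mem_sing {ι : Type*} (s : Finset ι) (f : ι → A)
    (h : ∀ i ∈ s, f i ∈ SingSet A) : (∑ i ∈ s, f i) ∈ SingSet A :=
  Finset.sum_induction f (· ∈ SingSet A) (fun _ _ ha hb => add_mem_sing ha hb)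
    zero_mem_sing h

lemma essential_finset_inter {ι : Type*} (s : Finset ι) (J : ι → Set A)
    (h : ∀ i ∈ s, IsEssentialRightIdeal (J i)) :
    IsEssentialRightIdeal {x : A | ∀ i ∈ s, x ∈ J i} := by
  classical
  induction s using Finset.induction_on with
  | empty => simpa using essential_univ
  | @insert a s ha ih =>
    have : {x : A | ∀ i ∈ insert a s, x ∈ J i} = J a ∩ {x : A | ∀ i ∈ s, x ∈ J i} := by
      ext x
      simp only [Set.mem_setOf_eq, Set.mem_inter_iff, Finset.mem_insert]
      constructor
      · intro hx; exact ⟨hx a (Or.inl rfl), fun i hi => hx i (Or.inr hi)⟩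
      · rintro ⟨h1, h2⟩ i (rfl | hi)
        · exact h1
        · exact h2 i hi
    rw [this]
    exact essential_inter (h a (Finset.mem_insert_self a s))
      (ih fun i hi => h i (Finset.mem_insert_of_mem hi))

/-! ### ACC on right annihilators: the singular set is nilpotent -/

lemma exists_maximal_rAnn (hacc : ACCRightAnnihilators A) (S : Set A) (hS : S.Nonempty) :
    ∃ a ∈ S, ∀ b ∈ S, rAnn a ⊆ rAnn b → rAnn b = rAnn a := by
  classical
  by_contra hcon
  push_neg at hcon
  obtain ⟨a0, ha0⟩ := hS
  choose g hgS hgsub hgne using hcon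
  let seq : ℕ → {x : A // x ∈ S} := fun n =>
    Nat.rec ⟨a0, ha0⟩ (fun _ p => ⟨g p.1 p.2, hgS p.1 p.2⟩) n
  have hstep : ∀ n, (seq (n + 1)).1 = g (seq n).1 (seq n).2 := fun _ => rfl
  obtain ⟨N, hN⟩ := hacc (fun n => rAnn (seq n).1)
    (fun n => ⟨{(seq n).1}, by ext r; simp [rAnn]⟩)
    (fun n => by
      show rAnn (seq n).1 ⊆ rAnn (seq (n + 1)).1
      rw [hstep]
      exact hgsub (seq n).1 (seq n).2)
  refine hgne (seq N).1 (seq N).2 ?_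
  rw [← hstep]
  exact hN (N + 1) (Nat.le_succ N)

/-- Mewborn–Winton: under ACC on right annihilators the singular set is nilpotent. -/
lemma sing_nilpotent (hacc : ACCRightAnnihilators A) : IsNilpotentSet (SingSet A) := by
  classical
  set Z := SingSet A with hZ
  let g : ℕ → Set A := fun n =>
    {r | ∀ f : Fin n → A, (∀ i, f i ∈ Z) → (List.ofFn f).prod * r = 0}
  have hann : ∀ n, ∃ X : Set A, g n = {a : A | ∀ x ∈ X, x * a = 0} := by
    intro n
    refine ⟨{p | ∃ f : Fin n → A, (∀ i, f i ∈ Z) ∧ p = (List.ofFn f).prod}, ?_⟩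
    ext r
    constructor
    · rintro hr x ⟨f, hf, rfl⟩
      exact hr f hf
    · intro hr f hf
      exact hr _ ⟨f, hf, rfl⟩
  have hincr : ∀ n, g n ⊆ g (n + 1) := by
    intro n r hr f hf
    have : List.ofFn f = f 0 :: List.ofFn (fun i => f i.succ) := List.ofFn_succ (f := f)
    rw [this, List.prod_cons, mul_assoc, hr (fun i => f i.succ) (fun i => hf i.succ),
      mul_zero]
  obtain ⟨N, hN⟩ := hacc g hann hincr
  have main : ∀ z ∈ Z, z ∈ g N := by
    by_contra hcon
    push_neg at hcon
    obtain ⟨z0, hz0Z, hz0⟩ := hcon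
    obtain ⟨a, ⟨haZ, hagN⟩, hamax⟩ :=
      exists_maximal_rAnn hacc {z | z ∈ Z ∧ z ∉ g N} ⟨z0, hz0Z, hz0⟩
    have ha0 : a ≠ 0 := by
      rintro rfl
      exact hagN (fun f _ => mul_zero _)
    have hsubba : ∀ b : A, rAnn a ⊆ rAnn (b * a) := by
      intro b r hr
      simp only [mem_rAnn] at *
      rw [mul_assoc, hr, mul_zero]
    have hba : ∀ b ∈ Z, b * a ∈ g N := by
      intro b hbZ
      by_contra hbagN
      have hbaZ : b * a ∈ Z := sing_of_subset haZ (hsubba b)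
      have heq : rAnn (b * a) = rAnn a := hamax (b * a) ⟨hbaZ, hbagN⟩ (hsubba b)
      have hJ : IsRightIdeal {y : A | ∃ r : A, y = a * r} := by
        refine ⟨⟨0, (mul_zero a).symm⟩, ?_, ?_⟩
        · rintro x ⟨r1, rfl⟩ y ⟨r2, rfl⟩
          exact ⟨r1 + r2, (mul_add a r1 r2).symm⟩
        · rintro x ⟨r1, rfl⟩ c
          exact ⟨r1 * c, mul_assoc a r1 c⟩
      obtain ⟨x, hxK, ⟨r, rfl⟩, hx0⟩ :=
        hbZ.2 _ hJ ⟨a, ⟨1, (mul_one a).symm⟩, ha0⟩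
      have hr : r ∈ rAnn (b * a) := by
        simp only [mem_rAnn, mul_assoc]
        exact hxK
      rw [heq] at hr
      exact hx0 hr
    have hmem : a ∈ g (N + 1) := by
      intro f hf
      have hsplit : List.ofFn f =
          (List.ofFn fun i : Fin N => f i.castSucc).concat (f (Fin.last N)) :=
        List.ofFn_succ' f
      rw [hsplit, List.prod_concat, mul_assoc]
      exact hba (f (Fin.last N)) (hf (Fin.last N)) (fun i => f i.castSucc)
        (fun i => hf i.castSucc)
    rw [hN (N + 1) (Nat.le_succ N)] at hmem
    exact hagN hmem
  refine ⟨N + 1, Nat.succ_pos N, ?_⟩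
  intro f hf
  have hsplit : List.ofFn f =
      (List.ofFn fun i : Fin N => f i.castSucc).concat (f (Fin.last N)) :=
    List.ofFn_succ' f
  rw [hsplit, List.prod_concat]
  exact main (f (Fin.last N)) (hf (Fin.last N)) (fun i => f i.castSucc)
    (fun i => hf i.castSucc)

end RingLemmas

/-! ### Module-algebra lemmas -/

section Key

variable {k : Type*} [Field k] {H A : Type*} [Ring H] [HopfAlgebra k H]
    [Ring A] [Algebra k A] (act : H →ₗ[k] A →ₗ[k] A)

/-- Expansion of `act h (x * c)` along a representation of `comul h`. -/
lemma act_mul_expand (hact : IsModuleAlgebra k act) (h : H) (r : Coalgebra.Repr k h (H × H))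
    (x c : A) :
    act h (x * c) = ∑ i ∈ r.index, act (r.left i) x * act (r.right i) c := by
  rw [hact.2.2.1 h x c, ← r.eq, map_sum, map_sum]
  apply Finset.sum_congr rfl
  intro i _
  rw [TensorProduct.map_tmul, LinearMap.mul'_apply]
  simp only [LinearMap.flip_apply]

lemma act_act (hact : IsModuleAlgebra k act) (u v : H) (y : A) :
    act u (act v y) = act (u * v) y := by
  rw [hact.1 u v]
  rfl

lemma act_one_apply (hact : IsModuleAlgebra k act) (y : A) : act 1 y = y := by
  rw [hact.2.1]
  rfl

/-- `∑ ε(h₂) • h₁ = h`. -/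
lemma counit_sum (h : H) (r : Coalgebra.Repr k h (H × H)) :
    (∑ i ∈ r.index, Coalgebra.counit (R := k) (r.right i) • r.left i) = h := by
  have := congrArg (TensorProduct.rid k H) (Coalgebra.sum_tmul_counit_eq (R := k) r)
  simp only [map_sum, TensorProduct.rid_tmul, one_smul] at this
  exact this

/-- The key Hopf identity: `(h ⊳ a) * x = ∑ h₁ ⊳ (a * (S h₂ ⊳ x))`. -/
lemma key_identity (hact : IsModuleAlgebra k act) (a x : A) (h : H)
    (r : Coalgebra.Repr k h (H × H)) :
    act h a * x = ∑ i ∈ r.index,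
      act (r.left i) (a * act (HopfAlgebra.antipode (R := k) (r.right i)) x) := by
  classical
  set S : H →ₗ[k] H := HopfAlgebra.antipode (R := k) (A := H) with hS
  -- the trilinear evaluation map  u ⊗ v ⊗ w ↦ (u ⊳ a) * ((v * S w) ⊳ x)
  let B2 : H →ₗ[k] H →ₗ[k] A := ((LinearMap.mul k H).compl₂ S).compr₂ (act.flip x)
  let Φ : H ⊗[k] (H ⊗[k] H) →ₗ[k] A :=
    (LinearMap.mul' k A) ∘ₗ (TensorProduct.map (act.flip a) (TensorProduct.lift B2))
  have hΦ : ∀ u v w : H, Φ (u ⊗ₜ[k] (v ⊗ₜ[k] w)) = act u a * act (v * S w) x := by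
    intro u v w
    simp only [Φ, B2, LinearMap.coe_comp, Function.comp_apply, TensorProduct.map_tmul,
      TensorProduct.lift.tmul, LinearMap.compr₂_apply, LinearMap.compl₂_apply,
      LinearMap.mul_apply', LinearMap.mul'_apply, LinearMap.flip_apply]
  let r1 : ∀ i : H × H, Coalgebra.Repr k (r.left i) (H × H) :=
    fun i => Coalgebra.Repr.arbitrary k (r.left i)
  let r2 : ∀ i : H × H, Coalgebra.Repr k (r.right i) (H × H) :=
    fun i => Coalgebra.Repr.arbitrary k (r.right i)
  have coas := Coalgebra.sum_tmul_tmul_eq (R := k) r r1 r2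
  have happ := congrArg Φ coas
  simp only [map_sum, hΦ] at happ
  -- RHS of the goal equals LHS of `happ`
  have hrhs : ∀ i ∈ r.index, act (r.left i) (a * act (S (r.right i)) x)
      = ∑ j ∈ (r1 i).index,
        act ((r1 i).left j) a * act ((r1 i).right j * S (r.right i)) x := by
    intro i _
    rw [act_mul_expand act hact (r.left i) (r1 i) a (act (S (r.right i)) x)]
    apply Finset.sum_congr rfl
    intro j _
    rw [act_act act hact]
  -- RHS of `happ` collapses via the antipode axiom
  have hlhs : ∀ i ∈ r.index,
      (∑ j ∈ (r2 i).index,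
        act (r.left i) a * act ((r2 i).left j * S ((r2 i).right j)) x)
      = Coalgebra.counit (R := k) (r.right i) • (act (r.left i) a * x) := by
    intro i _
    rw [← Finset.mul_sum]
    have hsum : (∑ j ∈ (r2 i).index, act ((r2 i).left j * S ((r2 i).right j)) x)
        = act (∑ j ∈ (r2 i).index, (r2 i).left j * S ((r2 i).right j)) x := by
      rw [map_sum, LinearMap.sum_apply]
    rw [hsum, HopfAlgebra.sum_mul_antipode_eq_smul (r2 i), map_smul,
      LinearMap.smul_apply, act_one_apply act hact, mul_smul_comm]
  calc act h a * x
      = act (∑ i ∈ r.index, Coalgebra.counit (R := k) (r.right i) • r.left i) a * x := by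
        rw [counit_sum h r]
    _ = ∑ i ∈ r.index, Coalgebra.counit (R := k) (r.right i) • (act (r.left i) a * x) := by
        rw [map_sum, LinearMap.sum_apply, Finset.sum_mul]
        apply Finset.sum_congr rfl
        intro i _
        rw [map_smul, LinearMap.smul_apply, smul_mul_assoc]
    _ = ∑ i ∈ r.index, ∑ j ∈ (r2 i).index,
          act (r.left i) a * act ((r2 i).left j * S ((r2 i).right j)) x :=
        (Finset.sum_congr rfl hlhs).symm
    _ = ∑ i ∈ r.index, ∑ j ∈ (r1 i).index,
          act ((r1 i).left j) a * act ((r1 i).right j * S (r.right i)) x := happ.symm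
    _ = ∑ i ∈ r.index, act (r.left i) (a * act (S (r.right i)) x) :=
        (Finset.sum_congr rfl hrhs).symm

end Key

/-- If `A` is `H`-semiprime and satisfies ACC on right annihilators,
then every right ideal `I ∈ E'_H` has zero left annihilator in `A`. -/
theorem memEH_lann_eq_zero (k : Type*) [Field k] {H A : Type*} [Ring H]
    [HopfAlgebra k H] [Ring A] [Algebra k A] (act : H →ₗ[k] A →ₗ[k] A)
    (hact : IsModuleAlgebra k act) (hsp : IsHSemiprime k act)
    (hacc : ACCRightAnnihilators A) :
    ∀ I : Set A, MemEH k act I → ∀ a : A, (∀ x ∈ I, a * x = 0) → a = 0 := by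
  classical
  intro I hI a ha
  -- Step 1: every `act h a` lies in the singular set.
  have step1 : ∀ h : H, act h a ∈ SingSet A := by
    intro h
    set r := Coalgebra.Repr.arbitrary k h with hr
    have hJ : ∀ q : H, ∃ J : Set A, IsEssentialRightIdeal J ∧
        ∀ x ∈ J, act (HopfAlgebra.antipode (R := k) q) x ∈ I :=
      fun q => hI.2 _ ⟨q, rfl⟩
    choose Jf hJe hJm using hJ
    have hKess : IsEssentialRightIdeal {x : A | ∀ i ∈ r.index, x ∈ Jf (r.right i)} :=
      essential_finset_inter r.index (fun i => Jf (r.right i)) (fun i _ => hJe _)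
    refine sing_of_subset hKess ?_
    intro x hx
    rw [mem_rAnn, key_identity act hact a x h r]
    refine Finset.sum_eq_zero ?_
    intro i hi
    rw [ha _ (hJm (r.right i) x (hx i hi)), map_zero]
  -- Step 2: the largest `H`-stable ideal inside the singular set.
  set T : Set A := {b | ∀ h : H, act h b ∈ SingSet A} with hT
  have haT : a ∈ T := step1
  have hTid : IsTwoSidedIdealSet T := by
    refine ⟨?_, ?_, ?_, ?_⟩
    · intro h; rw [map_zero]; exact zero_mem_sing
    · intro x hx y hy h; rw [map_add]; exact add_mem_sing (hx h) (hy h)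
    · intro x hx h; rw [map_neg]; exact neg_mem_sing (hx h)
    · intro x hx c
      constructor
      · intro h
        rw [act_mul_expand act hact h (Coalgebra.Repr.arbitrary k h) x c]
        exact sum_mem_sing _ _ (fun i _ => mul_right_mem_sing _ (hx _))
      · intro h
        rw [act_mul_expand act hact h (Coalgebra.Repr.arbitrary k h) c x]
        exact sum_mem_sing _ _ (fun i _ => mul_left_mem_sing _ (hx _))
  have hTstab : ∀ h : H, ∀ t ∈ T, act h t ∈ T := by
    intro h t ht h'
    rw [act_act act hact]
    exact ht _
  have hTsub : T ⊆ SingSet A := by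
    intro b hb
    have := hb 1
    rwa [act_one_apply act hact] at this
  have hTnil : IsNilpotentSet T := by
    obtain ⟨n, hn, hprod⟩ := sing_nilpotent hacc
    exact ⟨n, hn, fun f hf => hprod f (fun i => hTsub (hf i))⟩
  have hT0 := hsp T hTid hTstab hTnil
  rw [hT0] at haT
  simpa using haT
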